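/- For an attracting region U (f(U) ⊆ int U) there exists ε₀ > 0 such that every ε₀-pseudo-orbit starting in f(U) stays in U forever; consequently no chain recurrent point outside U can be chain-equivalent to a point inside f(U). -/
import Mathlib


/-- `x ⊣ y`: for every `ε > 0` there is an `ε`-pseudo-orbit of positive length from `x` to `y`. -/
def ChainLe {X : Type*} [MetricSpace X] (f : X → X) (x y : X) : Prop :=
  ∀ ε > 0, ∃ n : ℕ, 1 ≤ n ∧ ∃ p : ℕ → X, p 0 = x ∧ p n = y ∧
    ∀ i < n, dist (f (p i)) (p (i + 1)) < ε

/-- For an attracting region `U` (`f(U) ⊆ int U`) there is `ε₀ > 0` such that every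
`ε₀`-pseudo-orbit starting in `f(U)` stays in `U` forever; consequently no point outside
`U` is chain-equivalent to a point of `f(U)`. -/
theorem stmt11 {X : Type*} [MetricSpace X] [CompactSpace X] (f : X → X)
    (hf : Continuous f) (U : Set X) (hUc : IsCompact U)
    (hattr : f '' U ⊆ interior U) :
    ∃ ε₀ > 0,
      (∀ p : ℕ → X, p 0 ∈ f '' U → (∀ i, dist (f (p i)) (p (i + 1)) < ε₀) →
        ∀ n, p n ∈ U) ∧
      ∀ x ∉ U, ∀ y ∈ f '' U, ¬ (ChainLe f x y ∧ ChainLe f y x) := by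
  have hfUc : IsCompact (f '' U) := hUc.image hf
  obtain ⟨ε₀, hε₀, hth⟩ :=
    hfUc.exists_thickening_subset_open isOpen_interior hattr
  have hthU : Metric.thickening ε₀ (f '' U) ⊆ U := hth.trans interior_subset
  -- key step lemma
  have key : ∀ z w : X, z ∈ U → dist (f z) w < ε₀ → w ∈ U := by
    intro z w hz hd
    apply hthU
    rw [Metric.mem_thickening_iff]
    exact ⟨f z, ⟨z, hz, rfl⟩, by rwa [dist_comm]⟩
  refine ⟨ε₀, hε₀, ?_, ?_⟩
  · intro p hp0 hps n
    induction n with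
    | zero => exact interior_subset (hattr hp0)
    | succ n ih => exact key (p n) (p (n + 1)) ih (hps n)
  · rintro x hx y hy ⟨-, hyx⟩
    obtain ⟨n, hn, p, hp0, hpn, hps⟩ := hyx ε₀ hε₀
    have : ∀ i ≤ n, p i ∈ U := by
      intro i hi
      induction i with
      | zero => rw [hp0]; exact interior_subset (hattr hy)
      | succ i ih =>
        exact key (p i) (p (i + 1)) (ih (Nat.le_of_succ_le hi)) (hps i hi)
    exact hx (hpn ▸ this n le_rfl)
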